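/- arXiv:2602.03381 — 8 statements merged into one kernel-verified Lean document; each statement's English description precedes it below -/
import Mathlib

section
/- Let f : ℝ → ℝ be a non-constant function satisfying: (1) for all x, y ∈ ℝ, z ∈ [0,1], and γ ∈ [0,1), f(γ(z x + (1−z) y)) = f(γ(z f(x) + (1−z) f(y))); and (2) for all C ∈ ℝ and γ ∈ [0,1), f(C) = f(C + γ f(0)). Then f is the identity function: f(x) = x for all x ∈ ℝ. -/
/-!
Taking `y = 0`, `z = 1`, `γ = 1/2` in (1) gives `f (x / 2) = f (f x / 2)`, so it suffices to show
that `f` is injective. If `f u = f v` with `u < v`, then (1) with `γ = 1/2` and `z` varying shows that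
`f` is constant on `[u/2, v/2]`; feeding that interval back into (1) as the second argument, with
`z = 1/2` and an arbitrary first argument, shows that `f` is constant on every interval of length
`(v - u)/8`. Then `f` is locally constant on the connected space `ℝ`, hence constant.
-/

open Set

lemma IsLocallyConstant.of_forall_Icc_apply_eq {α : Type*} {f : ℝ → α} {δ : ℝ} (hδ : 0 < δ)
    (h : ∀ x, ∀ y ∈ Icc x (x + δ), f y = f x) : IsLocallyConstant f := by
  refine (IsLocallyConstant.iff_eventually_eq f).2 fun x ↦ ?_
  filter_upwards [Ioo_mem_nhds (sub_lt_self x hδ) (lt_add_of_pos_right x hδ)] with y hy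
  rcases le_total x y with hxy | hyx
  · exact h x y ⟨hxy, hy.2.le⟩
  · exact (h y x ⟨hyx, by linarith [hy.1]⟩).symm

section

variable {f : ℝ → ℝ}
  (hf : ∀ x y z γ : ℝ, z ∈ Icc (0:ℝ) 1 → γ ∈ Ico (0:ℝ) 1 →
    f (γ * (z * x + (1 - z) * y)) = f (γ * (z * f x + (1 - z) * f y)))
include hf

lemma apply_half_eq_apply_half_apply (x : ℝ) : f (2⁻¹ * x) = f (2⁻¹ * f x) := by
  simpa using hf x 0 1 2⁻¹ (by norm_num) (by norm_num)

lemma apply_eq_on_Icc_half_of_apply_eq {u v : ℝ} (huv : f u = f v) (hlt : u < v) :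
    ∀ w ∈ Icc (u / 2) (v / 2), f w = f (2⁻¹ * u) := by
  rintro w ⟨hwu, hwv⟩
  have hvu : 0 < v - u := sub_pos.2 hlt
  set z := (v - 2 * w) / (v - u)
  have hz : z ∈ Icc (0:ℝ) 1 :=
    ⟨div_nonneg (by linarith) hvu.le, (div_le_one hvu).2 (by linarith)⟩
  have hw : 2⁻¹ * (z * u + (1 - z) * v) = w := by
    simp only [z]
    field_simp
    ring
  have h := hf u v z 2⁻¹ hz (by norm_num)
  rw [hw, ← huv, ← add_mul, add_sub_cancel, one_mul] at h
  exact h.trans (apply_half_eq_apply_half_apply hf u).symm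

/-- The width `(b - a) / 4` comes from `x = 2⁻¹ * (2⁻¹ * p + 2⁻¹ * q)` with `p = 4 x - a`
fixed and `q` running over `[a, b]`. -/
lemma apply_eq_on_Icc_of_apply_eq_on_Icc {a b c : ℝ} (hc : ∀ q ∈ Icc a b, f q = c) :
    ∀ x, ∀ y ∈ Icc x (x + (b - a) / 4), f y = f x := by
  intro x y hy
  have key : ∀ q ∈ Icc a b, f (2⁻¹ * (2⁻¹ * (4 * x - a) + (1 - 2⁻¹) * q)) =
      f (2⁻¹ * (2⁻¹ * f (4 * x - a) + (1 - 2⁻¹) * c)) := by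
    intro q hq
    rw [hf _ q 2⁻¹ 2⁻¹ (by norm_num) (by norm_num), hc q hq]
  have hy' := key (a + 4 * (y - x)) ⟨by linarith [hy.1], by linarith [hy.2]⟩
  have hx' := key a ⟨le_rfl, by linarith [hy.1, hy.2]⟩
  ring_nf at hy' hx'
  rw [hy', hx']

lemma injective_of_not_const (hnc : ¬ ∀ x y : ℝ, f x = f y) : Function.Injective f := by
  intro u v huv
  by_contra hne
  wlog hlt : u < v generalizing u v
  · exact this huv.symm (Ne.symm hne) ((Ne.symm hne).lt_of_le (not_lt.1 hlt))
  have hconst := apply_eq_on_Icc_half_of_apply_eq hf huv hlt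
  have hloc := IsLocallyConstant.of_forall_Icc_apply_eq (by linarith)
    (apply_eq_on_Icc_of_apply_eq_on_Icc hf hconst)
  exact hnc hloc.apply_eq_of_preconnectedSpace

end

theorem stmt2_general (f : ℝ → ℝ)
    (hnc : ¬ ∀ x y : ℝ, f x = f y)
    (h1 : ∀ x y z γ : ℝ, z ∈ Set.Icc (0:ℝ) 1 → γ ∈ Set.Ico (0:ℝ) 1 →
      f (γ * (z * x + (1 - z) * y)) = f (γ * (z * f x + (1 - z) * f y))) :
    ∀ x : ℝ, f x = x := by
  intro x
  have h := injective_of_not_const h1 hnc (apply_half_eq_apply_half_apply h1 x)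
  linarith

/-- A non-constant `f : ℝ → ℝ` satisfying the two functional
equations must be the identity. -/
theorem stmt2 (f : ℝ → ℝ)
    (hnc : ¬ ∀ x y : ℝ, f x = f y)
    (h1 : ∀ x y z γ : ℝ, z ∈ Set.Icc (0:ℝ) 1 → γ ∈ Set.Ico (0:ℝ) 1 →
      f (γ * (z * x + (1 - z) * y)) = f (γ * (z * f x + (1 - z) * f y)))
    (h2 : ∀ C γ : ℝ, γ ∈ Set.Ico (0:ℝ) 1 → f C = f (C + γ * f 0)) :
    ∀ x : ℝ, f x = x :=
  stmt2_general f hnc h1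
end

section
/- Let f : ℝ → ℝ satisfy: for all x, y ∈ ℝ, z ∈ [0,1], γ ∈ [0,1), f(γ(z x + (1−z) y)) = f(γ(z f(x) + (1−z) f(y))). If there exist a < b with f(a) = f(b), then f is constant on the open interval (a, b). -/
/-!
Writing `u ∈ [a, b]` as the convex combination `z a + (1 - z) b`, the functional equation gives
`f (γ u) = f (γ (z f a + (1 - z) f b)) = f (γ f a)`, so for each `γ ∈ [0, 1)` the function `f` is
constant on `γ • [a, b]`. A point `x` of the open interval `(a, b)` lies in `γ • (a, b)` for all
`γ < 1` close enough to `1`, so any two such points lie in a common `γ • (a, b)`.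
-/

open Set Filter Topology

lemma apply_mul_eq_apply_mul_of_mem_Icc {f : ℝ → ℝ}
    (h1 : ∀ x y z γ : ℝ, z ∈ Icc (0:ℝ) 1 → γ ∈ Ico (0:ℝ) 1 →
      f (γ * (z * x + (1 - z) * y)) = f (γ * (z * f x + (1 - z) * f y)))
    {a b u γ : ℝ} (hfab : f a = f b) (hu : u ∈ Icc a b) (hγ : γ ∈ Ico (0:ℝ) 1) :
    f (γ * u) = f (γ * f a) := by
  rw [← segment_eq_Icc (hu.1.trans hu.2)] at hu
  obtain ⟨z, w, hz, hw, hzw, rfl⟩ := hu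
  obtain rfl : w = 1 - z := by linarith
  have := h1 a b z γ ⟨hz, by linarith⟩ hγ
  rw [← hfab, ← add_mul, add_sub_cancel, one_mul] at this
  simpa only [smul_eq_mul] using this

lemma eventually_div_mem_of_isOpen {s : Set ℝ} (hs : IsOpen s) {x : ℝ} (hx : x ∈ s) :
    ∀ᶠ γ in 𝓝 (1 : ℝ), x / γ ∈ s := by
  have hcont : ContinuousAt (fun γ : ℝ => x / γ) 1 :=
    continuousAt_const.div continuousAt_id one_ne_zero
  exact hcont.eventually_mem (by simpa using hs.mem_nhds hx)

theorem stmt3_general (f : ℝ → ℝ)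
    (h1 : ∀ x y z γ : ℝ, z ∈ Set.Icc (0:ℝ) 1 → γ ∈ Set.Ico (0:ℝ) 1 →
      f (γ * (z * x + (1 - z) * y)) = f (γ * (z * f x + (1 - z) * f y)))
    (a b : ℝ) (hfab : f a = f b) :
    ∀ x ∈ Set.Ioo a b, ∀ y ∈ Set.Ioo a b, f x = f y := by
  have hconst : ∀ x γ, γ ∈ Ioo (0:ℝ) 1 → x / γ ∈ Ioo a b → f x = f (γ * f a) := by
    intro x γ hγ hxγ
    rw [← mul_div_cancel₀ x hγ.1.ne']
    exact apply_mul_eq_apply_mul_of_mem_Icc h1 hfab (Ioo_subset_Icc_self hxγ)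
      (Ioo_subset_Ico_self hγ)
  intro x hx y hy
  have hnear : ∀ᶠ γ in 𝓝[<] (1:ℝ), γ ∈ Ioo 0 1 ∧ x / γ ∈ Ioo a b ∧ y / γ ∈ Ioo a b :=
    Filter.Eventually.and (Ioo_mem_nhdsLT one_pos) <| nhdsWithin_le_nhds <|
      (eventually_div_mem_of_isOpen isOpen_Ioo hx).and (eventually_div_mem_of_isOpen isOpen_Ioo hy)
  obtain ⟨γ, hγ, hxγ, hyγ⟩ := hnear.exists
  rw [hconst x γ hγ hxγ, hconst y γ hγ hyγ]

/-- If `f : ℝ → ℝ` satisfies the functional equation and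
`f a = f b` for some `a < b`, then `f` is constant on the open interval `(a, b)`. -/
theorem stmt3 (f : ℝ → ℝ)
    (h1 : ∀ x y z γ : ℝ, z ∈ Set.Icc (0:ℝ) 1 → γ ∈ Set.Ico (0:ℝ) 1 →
      f (γ * (z * x + (1 - z) * y)) = f (γ * (z * f x + (1 - z) * f y)))
    (a b : ℝ) (hab : a < b) (hfab : f a = f b) :
    ∀ x ∈ Set.Ioo a b, ∀ y ∈ Set.Ioo a b, f x = f y :=
  stmt3_general f h1 a b hfab
end

section
/- Suppose a, b, c ≥ 0 with a + b + c = 1, and set u = a/2 + b and v = a/2 + c. If u² = u − a/4, u·v = a/4, and v² = v − a/4, then (a, b, c) = (1, 0, 0) or (a, b, c) = (0, 1, 0) or (a, b, c) = (0, 0, 1). -/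
/-- The algebraic system arising from multiplicativity forces
`(a,b,c)` to be one of the standard basis vectors. -/
theorem stmt5 (a b c u v : ℝ)
    (ha : 0 ≤ a) (hb : 0 ≤ b) (hc : 0 ≤ c) (habc : a + b + c = 1)
    (hu : u = a / 2 + b) (hv : v = a / 2 + c)
    (h1 : u ^ 2 = u - a / 4) (h2 : u * v = a / 4) (h3 : v ^ 2 = v - a / 4) :
    (a, b, c) = (1, 0, 0) ∨ (a, b, c) = (0, 1, 0) ∨ (a, b, c) = (0, 0, 1) := by
  have ha4 : a = 4 * u - 4 * u ^ 2 := by linarith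
  have hb4 : b = 2 * u ^ 2 - u := by linarith
  have hc4 : c = 1 - 3 * u + 2 * u ^ 2 := by linarith
  rcases lt_trichotomy u (1/2) with h | h | h
  · have hu0 : u = 0 := by nlinarith
    right; right
    have e1 : a = 0 := by rw [ha4, hu0]; ring
    have e2 : b = 0 := by rw [hb4, hu0]; ring
    have e3 : c = 1 := by rw [hc4, hu0]; ring
    simp [e1, e2, e3]
  · left
    have e1 : a = 1 := by rw [ha4, h]; ring
    have e2 : b = 0 := by rw [hb4, h]; ring
    have e3 : c = 0 := by rw [hc4, h]; ring
    simp [e1, e2, e3]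
  · have hu1 : u = 1 := by nlinarith
    right; left
    have e1 : a = 0 := by rw [ha4, hu1]; ring
    have e2 : b = 1 := by rw [hb4, hu1]; ring
    have e3 : c = 0 := by rw [hc4, hu1]; ring
    simp [e1, e2, e3]
end

section
/- Let ρ be a law-invariant functional on bounded real random variables that is additive for independent random variables (ρ(X̃ + Ỹ) = ρ(X̃) + ρ(Ỹ) whenever X̃, Ỹ are independent), positively homogeneous (ρ(αX̃) = αρ(X̃) for α ≥ 0), that equals the identity on constants (ρ(c) = c), and that is continuous with respect to the Wasserstein-1 metric on laws. Then ρ coincides with the expectation: ρ(X̃) = E(X̃) for every bounded random variable X̃. -/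
open MeasureTheory ProbabilityTheory

/-- A bounded random variable. -/
def Bdd {Ω : Type*} (X : Ω → ℝ) : Prop := ∃ M : ℝ, ∀ ω, |X ω| ≤ M

/-- The (lower) quantile function of a law on `ℝ`. -/
noncomputable def quantile (μ : Measure ℝ) (p : ℝ) : ℝ :=
  sInf {x : ℝ | p ≤ ProbabilityTheory.cdf μ x}

/-- The Wasserstein-1 distance between two laws on `ℝ`, via quantile functions. -/
noncomputable def W1 (μ ν : Measure ℝ) : ℝ :=
  ∫ u in Set.Ioo (0:ℝ) 1, |quantile μ u - quantile ν u|

/-!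
By the richness assumption, `X` has i.i.d. bounded copies `Yᵢ`. Additivity over independent
summands, law invariance and homogeneity give `ρ(Aₙ) = ρ(X)` for the averages
`Aₙ = (Y₀ + ⋯ + Yₙ₋₁) / n`. By the strong law of large numbers `Aₙ → E X` almost surely, and
since the `Aₙ` are uniformly bounded, their quantile functions converge boundedly to the constant
`E X`, so the law of `Aₙ` converges to `δ_{E X}` in `W¹`. Continuity then gives
`ρ(X) = ρ(E X) = E X`.
-/

open Filter Topology Set

section Quantile

variable {μ : Measure ℝ} {p x : ℝ}

lemma bddBelow_setOf_le_cdf (hp : 0 < p) : BddBelow {x | p ≤ cdf μ x} := by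
  obtain ⟨a, ha⟩ := eventually_atBot.1 ((tendsto_cdf_atBot μ).eventually (gt_mem_nhds hp))
  exact ⟨a, fun x hx => le_of_not_ge fun hxa => (ha x hxa).not_ge hx⟩

lemma nonempty_setOf_le_cdf (hp : p < 1) : {x | p ≤ cdf μ x}.Nonempty :=
  ((tendsto_cdf_atTop μ).eventually (lt_mem_nhds hp)).exists.imp fun _ hx => hx.le

/-- Right-continuity of the cdf makes `quantile μ` a Galois connection on `(0, 1)`. -/
lemma quantile_le_iff (hp0 : 0 < p) (hp1 : p < 1) : quantile μ p ≤ x ↔ p ≤ cdf μ x := by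
  refine ⟨fun h => ?_, fun h => csInf_le (bddBelow_setOf_le_cdf hp0) h⟩
  have hq : p ≤ cdf μ (quantile μ p) := by
    refine ge_of_tendsto ((cdf μ).right_continuous _ |>.mono Ioi_subset_Ici_self) ?_
    filter_upwards [self_mem_nhdsWithin] with y hy
    obtain ⟨z, hz, hzy⟩ := exists_lt_of_csInf_lt (nonempty_setOf_le_cdf hp1) hy
    exact hz.trans (monotone_cdf μ hzy.le)
  exact hq.trans (monotone_cdf μ h)

lemma lt_quantile_iff (hp0 : 0 < p) (hp1 : p < 1) : x < quantile μ p ↔ cdf μ x < p := by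
  simpa only [not_le] using (quantile_le_iff (μ := μ) (x := x) hp0 hp1).not

lemma monotoneOn_quantile : MonotoneOn (quantile μ) (Ioo 0 1) := by
  rintro p ⟨hp0, hp1⟩ q ⟨hq0, hq1⟩ hpq
  exact (quantile_le_iff hp0 hp1).2 (hpq.trans ((quantile_le_iff hq0 hq1).1 le_rfl))

lemma abs_quantile_le [IsProbabilityMeasure μ] {M : ℝ} (hμ : ∀ᵐ y ∂μ, |y| ≤ M) (hp0 : 0 < p)
    (hp1 : p < 1) : |quantile μ p| ≤ M := by
  refine abs_le.2 ⟨le_of_forall_lt fun x hx => (lt_quantile_iff hp0 hp1).2 ?_,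
    (quantile_le_iff hp0 hp1).2 ?_⟩
  · have hsub : Iic x ⊆ {y | ¬|y| ≤ M} := fun y hy => by
      have := neg_abs_le y
      simp only [mem_Iic] at hy
      simp only [mem_ofPred_eq, not_le]
      linarith
    rw [cdf_eq_real, measureReal_def, measure_mono_null hsub (ae_iff.1 hμ), ENNReal.toReal_zero]
    exact hp0
  · have hfull : μ (Iic M) = 1 :=
      (prob_compl_eq_zero_iff measurableSet_Iic).1 (mem_ae_iff.1 (hμ.mono fun y hy =>
        (abs_le.1 hy).2))
    rw [cdf_eq_real, measureReal_def, hfull, ENNReal.toReal_one]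
    exact hp1.le

end Quantile

lemma cdf_dirac (c x : ℝ) : cdf (Measure.dirac c) x = if c ≤ x then 1 else 0 := by
  rw [cdf_eq_real, measureReal_def, Measure.dirac_apply' _ measurableSet_Iic]
  by_cases h : c ≤ x <;> simp [h]

lemma quantile_dirac {c p : ℝ} (hp0 : 0 < p) (hp1 : p ≤ 1) :
    quantile (Measure.dirac c) p = c := by
  have hset : {x : ℝ | p ≤ cdf (Measure.dirac c) x} = Ici c := by
    ext x
    rw [mem_ofPred_eq, cdf_dirac]
    by_cases h : c ≤ x <;> simp [h, hp1, not_le.2 hp0]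
  rw [quantile, hset, csInf_Ici]

section ConvergenceToDirac

variable {μ : ℕ → Measure ℝ} {c : ℝ}

lemma tendsto_quantile_of_tendsto_cdf
    (hμ : ∀ x ≠ c, Tendsto (fun n => cdf (μ n) x) atTop (𝓝 (cdf (Measure.dirac c) x)))
    {p : ℝ} (hp0 : 0 < p) (hp1 : p < 1) :
    Tendsto (fun n => quantile (μ n) p) atTop (𝓝 c) := by
  refine tendsto_order.2 ⟨fun a ha => ?_, fun b hb => ?_⟩
  · have h := hμ a ha.ne
    rw [cdf_dirac, if_neg (not_le.2 ha)] at h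
    filter_upwards [h.eventually (gt_mem_nhds hp0)] with n hn
    exact (lt_quantile_iff hp0 hp1).2 hn
  · obtain ⟨b', hcb', hb'b⟩ := exists_between hb
    have h := hμ b' hcb'.ne'
    rw [cdf_dirac, if_pos hcb'.le] at h
    filter_upwards [h.eventually (lt_mem_nhds hp1)] with n hn
    exact ((quantile_le_iff hp0 hp1).2 hn.le).trans_lt hb'b

lemma tendsto_W1_dirac_of_tendsto_cdf [∀ n, IsProbabilityMeasure (μ n)] {M : ℝ}
    (hbdd : ∀ n, ∀ᵐ y ∂μ n, |y| ≤ M)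
    (hμ : ∀ x ≠ c, Tendsto (fun n => cdf (μ n) x) atTop (𝓝 (cdf (Measure.dirac c) x))) :
    Tendsto (fun n => W1 (μ n) (Measure.dirac c)) atTop (𝓝 0) := by
  have hW1 : ∀ n, W1 (μ n) (Measure.dirac c) = ∫ p in Ioo 0 1, |quantile (μ n) p - c| :=
    fun n => setIntegral_congr_fun measurableSet_Ioo fun p hp => by
      rw [quantile_dirac hp.1 hp.2.le]
  simp_rw [hW1]
  have hlim := tendsto_integral_of_dominated_convergence (μ := volume.restrict (Ioo (0:ℝ) 1))
    (F := fun n p => |quantile (μ n) p - c|) (f := fun _ => 0) (fun _ => M + |c|)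
    (fun n => ((aemeasurable_restrict_of_monotoneOn measurableSet_Ioo monotoneOn_quantile).sub
      aemeasurable_const).abs.aestronglyMeasurable)
    (integrable_const _)
    (fun n => (ae_restrict_iff' measurableSet_Ioo).2 (ae_of_all _ fun p hp => by
      rw [Real.norm_eq_abs, abs_abs]
      exact (abs_sub _ _).trans (add_le_add_left (abs_quantile_le (hbdd n) hp.1 hp.2) _)))
    ((ae_restrict_iff' measurableSet_Ioo).2 (ae_of_all _ fun p hp => by
      simpa using ((tendsto_quantile_of_tendsto_cdf hμ hp.1 hp.2).sub_const c).abs))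
  simpa using hlim

end ConvergenceToDirac

section RandomVariables

variable {Ω : Type*} [MeasurableSpace Ω] {P : Measure Ω}

lemma tendsto_cdf_map_of_ae_tendsto [IsProbabilityMeasure P] {S : ℕ → Ω → ℝ} {Z : Ω → ℝ} {x : ℝ}
    (hS : ∀ n, Measurable (S n)) (hZ : Measurable Z)
    (hlim : ∀ᵐ ω ∂P, Tendsto (fun n => S n ω) atTop (𝓝 (Z ω)))
    (hx : ∀ᵐ ω ∂P, Z ω ≠ x) :
    Tendsto (fun n => cdf (P.map (S n)) x) atTop (𝓝 (cdf (P.map Z) x)) := by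
  have hmeas : Tendsto (fun n => P (S n ⁻¹' Iic x)) atTop (𝓝 (P (Z ⁻¹' Iic x))) := by
    refine tendsto_measure_of_ae_tendsto_indicator_of_isFiniteMeasure _
      (hZ measurableSet_Iic) (fun n => hS n measurableSet_Iic) ?_
    filter_upwards [hlim, hx] with ω hω hωx
    rcases hωx.lt_or_gt with h | h
    · filter_upwards [hω.eventually (gt_mem_nhds h)] with n hn
      simp [hn.le, h.le]
    · filter_upwards [hω.eventually (lt_mem_nhds h)] with n hn
      simp [not_le.2 hn, not_le.2 h]
  have := fun n => Measure.isProbabilityMeasure_map (μ := P) (hS n).aemeasurable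
  have := Measure.isProbabilityMeasure_map (μ := P) hZ.aemeasurable
  simp_rw [cdf_eq_real, measureReal_def, Measure.map_apply (hS _) measurableSet_Iic,
    Measure.map_apply hZ measurableSet_Iic]
  exact (ENNReal.tendsto_toReal (measure_ne_top _ _)).comp hmeas

lemma tendsto_W1_map_const_of_ae_tendsto [IsProbabilityMeasure P] {S : ℕ → Ω → ℝ} {c M : ℝ}
    (hS : ∀ n, Measurable (S n))
    (hbdd : ∀ n, ∀ᵐ ω ∂P, |S n ω| ≤ M) (hlim : ∀ᵐ ω ∂P, Tendsto (fun n => S n ω) atTop (𝓝 c)) :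
    Tendsto (fun n => W1 (P.map (S n)) (P.map fun _ => c)) atTop (𝓝 0) := by
  have := fun n => Measure.isProbabilityMeasure_map (μ := P) (hS n).aemeasurable
  have hconst : P.map (fun _ => c) = Measure.dirac c := by simp [Measure.map_const]
  rw [hconst]
  refine tendsto_W1_dirac_of_tendsto_cdf
    (fun n => (ae_map_iff (hS n).aemeasurable (measurableSet_le measurable_abs measurable_const)).2
      (hbdd n)) fun x hx => ?_
  rw [← hconst]
  exact tendsto_cdf_map_of_ae_tendsto hS measurable_const hlim (ae_of_all _ fun _ => hx.symm)

lemma ae_tendsto_average_of_identDistrib {X : Ω → ℝ} {Y : ℕ → Ω → ℝ}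
    (hX : Integrable X P) (hY : iIndepFun Y P) (hYX : ∀ i, IdentDistrib (Y i) X P P) :
    ∀ᵐ ω ∂P, Tendsto (fun n : ℕ => (n : ℝ)⁻¹ * ∑ i ∈ Finset.range n, Y i ω) atTop
      (𝓝 (∫ ω, X ω ∂P)) := by
  rw [← (hYX 0).integral_eq]
  exact strong_law_ae Y ((hYX 0).integrable_iff.2 hX) (fun i j hij => hY.indepFun hij)
    fun i => (hYX i).trans (hYX 0).symm

end RandomVariables

section Bdd

variable {Ω : Type*}

lemma Bdd.const_mul {X : Ω → ℝ} (hX : Bdd X) (a : ℝ) : Bdd fun ω => a * X ω := by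
  obtain ⟨M, hM⟩ := hX
  exact ⟨|a| * M, fun ω => by
    rw [abs_mul]; exact mul_le_mul_of_nonneg_left (hM ω) (abs_nonneg a)⟩

lemma bdd_sum {ι : Type*} {Y : ι → Ω → ℝ} (hY : ∀ i, Bdd (Y i)) (s : Finset ι) :
    Bdd fun ω => ∑ i ∈ s, Y i ω := by
  choose B hB using hY
  exact ⟨∑ i ∈ s, B i, fun ω =>
    (Finset.abs_sum_le_sum_abs _ _).trans (Finset.sum_le_sum fun i _ => hB i ω)⟩

lemma Bdd.integrable [MeasurableSpace Ω] {P : Measure Ω} [IsFiniteMeasure P] {X : Ω → ℝ}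
    (hX : Bdd X) (hXm : Measurable X) : Integrable X P := by
  obtain ⟨M, hM⟩ := hX
  exact .of_bound hXm.aestronglyMeasurable M (ae_of_all _ hM)

end Bdd

lemma abs_average_le {y : ℕ → ℝ} {M : ℝ} (hy : ∀ i, |y i| ≤ M) (n : ℕ) :
    |(n : ℝ)⁻¹ * ∑ i ∈ Finset.range n, y i| ≤ M := by
  rcases n.eq_zero_or_pos with rfl | hn
  · simpa using (abs_nonneg _).trans (hy 0)
  have hn' : (0 : ℝ) < n := Nat.cast_pos.2 hn
  calc |(n : ℝ)⁻¹ * ∑ i ∈ Finset.range n, y i|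
      ≤ (n : ℝ)⁻¹ * ∑ _i ∈ Finset.range n, M := by
        rw [abs_mul, abs_inv, Nat.abs_cast]
        exact mul_le_mul_of_nonneg_left ((Finset.abs_sum_le_sum_abs _ _).trans
          (Finset.sum_le_sum fun i _ => hy i)) (inv_nonneg.2 hn'.le)
    _ = M := by
        rw [Finset.sum_const, Finset.card_range, nsmul_eq_mul, inv_mul_cancel_left₀ hn'.ne']

lemma map_sum_of_iIndepFun {Ω : Type*} [MeasureSpace Ω] {ρ : (Ω → ℝ) → ℝ}
    (hadd : ∀ X Y : Ω → ℝ, Bdd X → Bdd Y → Measurable X → Measurable Y →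
      IndepFun X Y volume → ρ (fun ω => X ω + Y ω) = ρ X + ρ Y)
    (hzero : ρ (fun _ => 0) = 0) {Y : ℕ → Ω → ℝ} (hYm : ∀ i, Measurable (Y i))
    (hYb : ∀ i, Bdd (Y i)) (hY : iIndepFun Y volume) (n : ℕ) :
    ρ (fun ω => ∑ i ∈ Finset.range n, Y i ω) = ∑ i ∈ Finset.range n, ρ (Y i) := by
  induction n with
  | zero => simpa using hzero
  | succ n ih =>
    have hindep : IndepFun (fun ω => ∑ i ∈ Finset.range n, Y i ω) (Y n) volume := by
      simpa only [Finset.sum_fn] using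
        hY.indepFun_finsetSum_of_notMem hYm Finset.notMem_range_self
    simp only [Finset.sum_range_succ]
    rw [hadd _ _ (bdd_sum hYb _) (hYb n) (Finset.measurable_fun_sum _ fun i _ => hYm i) (hYm n)
      hindep, ih]

/-- A law-invariant functional on bounded real random variables
(over a rich enough probability space) that is additive for independent
variables, positively homogeneous, equal to the identity on constants, and
Wasserstein-1 continuous, coincides with the expectation. -/
theorem stmt8 {Ω : Type*} [MeasureSpace Ω] [IsProbabilityMeasure (volume : Measure Ω)]
    (ρ : (Ω → ℝ) → ℝ)
    (hlaw : ∀ X Y : Ω → ℝ, Bdd X → Bdd Y → Measurable X → Measurable Y →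
      Measure.map X volume = Measure.map Y volume → ρ X = ρ Y)
    (hadd : ∀ X Y : Ω → ℝ, Bdd X → Bdd Y → Measurable X → Measurable Y →
      IndepFun X Y volume → ρ (fun ω => X ω + Y ω) = ρ X + ρ Y)
    (hhom : ∀ (X : Ω → ℝ) (α : ℝ), Bdd X → Measurable X → 0 ≤ α →
      ρ (fun ω => α * X ω) = α * ρ X)
    (hconst : ∀ c : ℝ, ρ (fun _ => c) = c)
    (hW1 : ∀ (Y : ℕ → Ω → ℝ) (Z : Ω → ℝ), (∀ n, Bdd (Y n)) → Bdd Z →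
      (∀ n, Measurable (Y n)) → Measurable Z →
      Filter.Tendsto
        (fun n => W1 (Measure.map (Y n) volume) (Measure.map Z volume))
        Filter.atTop (nhds 0) →
      Filter.Tendsto (fun n => ρ (Y n)) Filter.atTop (nhds (ρ Z)))
    (hrich : ∀ X : Ω → ℝ, Bdd X → Measurable X →
      ∃ Y : ℕ → Ω → ℝ, (∀ i, Measurable (Y i)) ∧ (∀ i, Bdd (Y i)) ∧
        iIndepFun Y volume ∧
        ∀ i, Measure.map (Y i) volume = Measure.map X volume)
    (X : Ω → ℝ) (hX : Bdd X) (hXm : Measurable X) :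
    ρ X = ∫ ω, X ω := by
  obtain ⟨Y, hYm, hYb, hY, hYlaw⟩ := hrich X hX hXm
  have hYX : ∀ i, IdentDistrib (Y i) X := fun i =>
    ⟨(hYm i).aemeasurable, hXm.aemeasurable, hYlaw i⟩
  set A : ℕ → Ω → ℝ := fun n ω => (n : ℝ)⁻¹ * ∑ i ∈ Finset.range n, Y i ω
  have hAm : ∀ n, Measurable (A n) := fun n =>
    (Finset.measurable_fun_sum _ fun i _ => hYm i).const_mul _
  have hAb : ∀ n, Bdd (A n) := fun n => (bdd_sum hYb _).const_mul _
  have hρA : ∀ n ≠ 0, ρ (A n) = ρ X := fun n hn => by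
    rw [hhom _ _ (bdd_sum hYb _) (Finset.measurable_fun_sum _ fun i _ => hYm i) (by positivity),
      map_sum_of_iIndepFun hadd (hconst 0) hYm hYb hY,
      Finset.sum_congr rfl fun i _ => hlaw _ _ (hYb i) hX (hYm i) hXm (hYlaw i),
      Finset.sum_const, Finset.card_range, nsmul_eq_mul,
      inv_mul_cancel_left₀ (Nat.cast_ne_zero.2 hn)]
  obtain ⟨M, hM⟩ := hX
  have hAbdd : ∀ n, ∀ᵐ ω, |A n ω| ≤ M := fun n => by
    filter_upwards [ae_all_iff.2 fun i => (hYX i).symm.ae_snd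
      (measurableSet_le measurable_abs measurable_const) (ae_of_all _ hM)] with ω hω
    exact abs_average_le hω n
  have hlim := hW1 A _ hAb ⟨_, fun _ => le_rfl⟩ hAm measurable_const
    (tendsto_W1_map_const_of_ae_tendsto hAm hAbdd
      (ae_tendsto_average_of_identDistrib (Bdd.integrable ⟨M, hM⟩ hXm) hY hYX))
  rw [hconst] at hlim
  exact tendsto_nhds_unique (tendsto_const_nhds.congr'
    (eventually_ne_atTop 0 |>.mono fun n hn => (hρA n hn).symm)) hlim
end

section
/- Let T and T^π : ℝ^S → ℝ^S be γ-contractions in the sup-norm (γ ∈ [0,1)) with respective fixed points V* and V^π. Suppose V ∈ ℝ^S satisfies TV = T^π V. Then ‖V^π − V*‖_∞ ≤ (2γ/(1−γ)) · ‖V − V*‖_∞. -/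
/-- Error bound for the greedy policy extracted from an
approximate value function: if `T V = Tπ V`, then
`‖Vπ − V*‖_∞ ≤ (2γ/(1−γ)) ‖V − V*‖_∞`. -/
theorem stmt13 {S : Type*} [Fintype S] [Nonempty S]
    (γ : ℝ) (hγ : γ ∈ Set.Ico (0:ℝ) 1)
    (T Tπ : (S → ℝ) → (S → ℝ))
    (hT : ∀ v w : S → ℝ, ‖T v - T w‖ ≤ γ * ‖v - w‖)
    (hTπ : ∀ v w : S → ℝ, ‖Tπ v - Tπ w‖ ≤ γ * ‖v - w‖)
    (Vstar Vπ : S → ℝ) (hfix : T Vstar = Vstar) (hfixπ : Tπ Vπ = Vπ)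
    (V : S → ℝ) (hgreedy : T V = Tπ V) :
    ‖Vπ - Vstar‖ ≤ (2 * γ / (1 - γ)) * ‖V - Vstar‖ := by
  obtain ⟨hγ0, hγ1⟩ := hγ
  have h1 : ‖Vπ - Vstar‖ ≤ ‖Vπ - Tπ V‖ + ‖Tπ V - Vstar‖ := norm_sub_le_norm_sub_add_norm_sub _ _ _
  have h2 : ‖Vπ - Tπ V‖ ≤ γ * ‖Vπ - V‖ := by
    calc ‖Vπ - Tπ V‖ = ‖Tπ Vπ - Tπ V‖ := by rw [hfixπ]
    _ ≤ γ * ‖Vπ - V‖ := hTπ _ _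
  have h3 : ‖Tπ V - Vstar‖ ≤ γ * ‖V - Vstar‖ := by
    calc ‖Tπ V - Vstar‖ = ‖T V - T Vstar‖ := by rw [hgreedy, hfix]
    _ ≤ γ * ‖V - Vstar‖ := hT _ _
  have h4 : ‖Vπ - V‖ ≤ ‖Vπ - Vstar‖ + ‖Vstar - V‖ := norm_sub_le_norm_sub_add_norm_sub _ _ _
  have h5 : ‖Vstar - V‖ = ‖V - Vstar‖ := norm_sub_rev _ _
  have key : (1 - γ) * ‖Vπ - Vstar‖ ≤ 2 * γ * ‖V - Vstar‖ := by nlinarith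
  have hpos : (0:ℝ) < 1 - γ := by linarith
  rw [div_mul_eq_mul_div, le_div_iff₀ hpos]
  linarith
end

section
/- Suppose a functional Φ on bounded nonnegative random variables has the form Φ(X̃) = a·E(X̃) + b·ess inf(X̃) + c·ess sup(X̃) with a, b, c ≥ 0, a + b + c = 1, and Φ is multiplicative on independent uniform random variables: for all 0 ≤ x₁ ≤ x₂ and 0 ≤ z₁ ≤ z₂ and independent X̃ ~ Unif([x₁,x₂]), Z̃ ~ Unif([z₁,z₂]), Φ(X̃Z̃) = Φ(X̃)Φ(Z̃). Then Φ is the expectation (a=1), the essential infimum (b=1), or the essential supremum (c=1). -/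
/-! With `X`, `Z` independent and uniform on `[0, 1]`, the functional takes the values
`Φ X = Φ Z = a/2 + c` and, since `E(XZ) = 1/4` while `XZ` still has essential range `[0, 1]`,
`Φ (XZ) = a/4 + c`. Multiplicativity then forces `(a/2 + c)² = a/4 + c`, which after
eliminating `b` reads `b c = a (a - 1) / 4`: the left side is nonnegative and the right side
nonpositive, so `b c = 0` and `a ∈ {0, 1}`. -/

open MeasureTheory ProbabilityTheory

/-- The uniform distribution on `[a, b]` (Dirac mass if `a = b`). -/
noncomputable def unif (a b : ℝ) : Measure ℝ :=
  if a = b then Measure.dirac a else ProbabilityTheory.cond volume (Set.Icc a b)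

open Set

lemma unif_zero_one : unif 0 1 = volume.restrict (Icc 0 1) := by
  rw [unif, if_neg zero_ne_one, ProbabilityTheory.cond, Real.volume_Icc]
  norm_num

lemma bdd_of_mem_Icc {Ω : Type*} {X : Ω → ℝ} {m M : ℝ} (hX : ∀ ω, X ω ∈ Icc m M) : Bdd X :=
  ⟨max |m| |M|, fun ω => abs_le_max_abs_abs (hX ω).1 (hX ω).2⟩

lemma eq_one_or_eq_one_or_eq_one_of_mul_self_eq {a b c : ℝ} (ha : 0 ≤ a) (hb : 0 ≤ b)
    (hc : 0 ≤ c) (habc : a + b + c = 1) (h : a / 4 + c = (a / 2 + c) * (a / 2 + c)) :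
    a = 1 ∨ b = 1 ∨ c = 1 := by
  have hbc : b * c = a * (a - 1) / 4 := by linear_combination h + c * habc
  have hbc0 : b * c = 0 := le_antisymm (by nlinarith) (mul_nonneg hb hc)
  rcases mul_eq_zero.1 (show a * (a - 1) = 0 by linarith) with ha0 | ha1
  · rcases mul_eq_zero.1 hbc0 with hb0 | hc0
    · exact Or.inr (Or.inr (by linarith))
    · exact Or.inr (Or.inl (by linarith))
  · exact Or.inl (by linarith)

section EssBounds

variable {Ω : Type*} [MeasurableSpace Ω] {μ : Measure Ω} {X : Ω → ℝ}

lemma essSup_eq_of_le_of_measure_ne_zero {M : ℝ} (hle : ∀ ω, X ω ≤ M)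
    (hpos : ∀ t < M, μ {ω | t < X ω} ≠ 0) : essSup X μ = M := by
  have hnull : {t | μ {ω | t < X ω} = 0} = Ici M := by
    ext t
    refine ⟨fun ht => not_lt.1 fun htM => hpos t htM ht, fun hMt => ?_⟩
    have hempty : {ω | t < X ω} = ∅ := by
      ext ω
      simpa using (hle ω).trans hMt
    simp [hempty]
  rw [essSup_eq_sInf, hnull, csInf_Ici]

lemma essInf_eq_of_le_of_measure_ne_zero {m : ℝ} (hle : ∀ ω, m ≤ X ω)
    (hpos : ∀ t > m, μ {ω | X ω < t} ≠ 0) : essInf X μ = m := by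
  have hnull : {t | μ {ω | X ω < t} = 0} = Iic m := by
    ext t
    refine ⟨fun ht => not_lt.1 fun hmt => hpos t hmt ht, fun htm => ?_⟩
    have hempty : {ω | X ω < t} = ∅ := by
      ext ω
      simpa using htm.trans (hle ω)
    simp [hempty]
  rw [essInf_eq_sSup, hnull, csSup_Iic]

end EssBounds

section UniformZeroOne

variable {Ω : Type*} [MeasurableSpace Ω] {μ : Measure Ω} {X Z : Ω → ℝ}

lemma measure_preimage_of_map_eq_unif_zero_one (hX : Measurable X)
    (hmap : μ.map X = unif 0 1) {s : Set ℝ} (hs : MeasurableSet s) :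
    μ (X ⁻¹' s) = volume (s ∩ Icc 0 1) := by
  rw [← Measure.map_apply hX hs, hmap, unif_zero_one, Measure.restrict_apply hs]

lemma measure_gt_ne_zero_of_map_eq_unif_zero_one (hX : Measurable X)
    (hmap : μ.map X = unif 0 1) {t : ℝ} (ht : t < 1) : μ {ω | t < X ω} ≠ 0 := by
  change μ (X ⁻¹' Ioi t) ≠ 0
  rw [measure_preimage_of_map_eq_unif_zero_one hX hmap measurableSet_Ioi]
  have hsub : Ioo (max t 0) 1 ⊆ Ioi t ∩ Icc 0 1 := fun x hx =>
    ⟨(le_max_left t 0).trans_lt hx.1, ((le_max_right t 0).trans_lt hx.1).le, hx.2.le⟩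
  exact (((Measure.measure_Ioo_pos volume).2 (max_lt ht one_pos)).trans_le
    (measure_mono hsub)).ne'

lemma measure_lt_ne_zero_of_map_eq_unif_zero_one (hX : Measurable X)
    (hmap : μ.map X = unif 0 1) {t : ℝ} (ht : 0 < t) : μ {ω | X ω < t} ≠ 0 := by
  change μ (X ⁻¹' Iio t) ≠ 0
  rw [measure_preimage_of_map_eq_unif_zero_one hX hmap measurableSet_Iio]
  have hsub : Ioo 0 (min t 1) ⊆ Iio t ∩ Icc 0 1 := fun x hx =>
    ⟨hx.2.trans_le (min_le_left t 1), hx.1.le, (hx.2.trans_le (min_le_right t 1)).le⟩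
  exact (((Measure.measure_Ioo_pos volume).2 (lt_min ht one_pos)).trans_le
    (measure_mono hsub)).ne'

lemma integral_eq_half_of_map_eq_unif_zero_one (hX : Measurable X)
    (hmap : μ.map X = unif 0 1) : ∫ ω, X ω ∂μ = 1 / 2 := by
  rw [← integral_map (f := fun x => x) hX.aemeasurable aestronglyMeasurable_id, hmap,
    unif_zero_one, integral_Icc_eq_integral_Ioc, ← intervalIntegral.integral_of_le zero_le_one]
  simp

lemma essInf_eq_zero_of_map_eq_unif_zero_one (hX : Measurable X) (hmap : μ.map X = unif 0 1)
    (hX01 : ∀ ω, X ω ∈ Icc 0 1) : essInf X μ = 0 :=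
  essInf_eq_of_le_of_measure_ne_zero (fun ω => (hX01 ω).1)
    fun _ ht => measure_lt_ne_zero_of_map_eq_unif_zero_one hX hmap ht

lemma essSup_eq_one_of_map_eq_unif_zero_one (hX : Measurable X) (hmap : μ.map X = unif 0 1)
    (hX01 : ∀ ω, X ω ∈ Icc 0 1) : essSup X μ = 1 :=
  essSup_eq_of_le_of_measure_ne_zero (fun ω => (hX01 ω).2)
    fun _ ht => measure_gt_ne_zero_of_map_eq_unif_zero_one hX hmap ht

lemma measure_gt_mul_ne_zero (hXZ : IndepFun X Z μ)
    (hXtail : ∀ t < 1, μ {ω | t < X ω} ≠ 0) (hZtail : ∀ t < 1, μ {ω | t < Z ω} ≠ 0)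
    {t : ℝ} (ht : t < 1) : μ {ω | t < X ω * Z ω} ≠ 0 := by
  obtain ⟨r, hr0, hr1, hrt⟩ : ∃ r, 0 < r ∧ r < 1 ∧ t < r * r := by
    have hmax := max_lt ht one_pos
    refine ⟨(max t 0 + 1) / 2, by positivity, by linarith, ?_⟩
    nlinarith [le_max_left t 0, le_max_right t 0]
  have hsub : X ⁻¹' Ioi r ∩ Z ⁻¹' Ioi r ⊆ {ω | t < X ω * Z ω} := fun ω hω =>
    hrt.trans (mul_lt_mul'' hω.1 hω.2 hr0.le hr0.le)
  intro hnull
  have hprod := measure_mono_null hsub hnull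
  rw [hXZ.measure_inter_preimage_eq_mul _ _ measurableSet_Ioi measurableSet_Ioi] at hprod
  rcases mul_eq_zero.1 hprod with h | h
  exacts [hXtail r hr1 h, hZtail r hr1 h]

lemma integral_mul_eq_quarter_of_map_eq_unif_zero_one (hXZ : IndepFun X Z μ)
    (hX : Measurable X) (hZ : Measurable Z) (hmapX : μ.map X = unif 0 1)
    (hmapZ : μ.map Z = unif 0 1) : ∫ ω, X ω * Z ω ∂μ = 1 / 4 := by
  rw [hXZ.integral_fun_mul_eq_mul_integral hX.aestronglyMeasurable hZ.aestronglyMeasurable,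
    integral_eq_half_of_map_eq_unif_zero_one hX hmapX,
    integral_eq_half_of_map_eq_unif_zero_one hZ hmapZ]
  norm_num

lemma essInf_mul_eq_zero_of_map_eq_unif_zero_one (hX : Measurable X)
    (hmapX : μ.map X = unif 0 1) (hX0 : ∀ ω, 0 ≤ X ω) (hZ01 : ∀ ω, Z ω ∈ Icc 0 1) :
    essInf (fun ω => X ω * Z ω) μ = 0 :=
  essInf_eq_of_le_of_measure_ne_zero (fun ω => mul_nonneg (hX0 ω) (hZ01 ω).1)
    fun _ ht hnull => measure_lt_ne_zero_of_map_eq_unif_zero_one hX hmapX ht <|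
      measure_mono_null (fun ω hω => (mul_le_of_le_one_right (hX0 ω) (hZ01 ω).2).trans_lt hω) hnull

lemma essSup_mul_eq_one_of_map_eq_unif_zero_one (hXZ : IndepFun X Z μ)
    (hX : Measurable X) (hZ : Measurable Z) (hmapX : μ.map X = unif 0 1)
    (hmapZ : μ.map Z = unif 0 1) (hXZ1 : ∀ ω, X ω * Z ω ≤ 1) :
    essSup (fun ω => X ω * Z ω) μ = 1 :=
  essSup_eq_of_le_of_measure_ne_zero hXZ1 fun _ =>
    measure_gt_mul_ne_zero hXZ (fun _ => measure_gt_ne_zero_of_map_eq_unif_zero_one hX hmapX)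
      (fun _ => measure_gt_ne_zero_of_map_eq_unif_zero_one hZ hmapZ)

end UniformZeroOne

theorem stmt15_general {Ω : Type*} [MeasureSpace Ω]
    (Φ : (Ω → ℝ) → ℝ) (a b c : ℝ)
    (ha : 0 ≤ a) (hb : 0 ≤ b) (hc : 0 ≤ c) (habc : a + b + c = 1)
    (hform : ∀ X : Ω → ℝ, Bdd X → Measurable X → (∀ ω, 0 ≤ X ω) →
      Φ X = a * (∫ ω, X ω) + b * essInf X volume + c * essSup X volume)
    (hexist : ∀ x₁ x₂ z₁ z₂ : ℝ, 0 ≤ x₁ → x₁ ≤ x₂ → 0 ≤ z₁ → z₁ ≤ z₂ →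
      ∃ X Z : Ω → ℝ, Measurable X ∧ Measurable Z ∧
        (∀ ω, X ω ∈ Set.Icc x₁ x₂) ∧ (∀ ω, Z ω ∈ Set.Icc z₁ z₂) ∧
        IndepFun X Z volume ∧
        Measure.map X volume = unif x₁ x₂ ∧ Measure.map Z volume = unif z₁ z₂)
    (hmult : ∀ (X Z : Ω → ℝ), Measurable X → Measurable Z → IndepFun X Z volume →
      (∃ x₁ x₂ : ℝ, 0 ≤ x₁ ∧ x₁ ≤ x₂ ∧ Measure.map X volume = unif x₁ x₂) →
      (∃ z₁ z₂ : ℝ, 0 ≤ z₁ ∧ z₁ ≤ z₂ ∧ Measure.map Z volume = unif z₁ z₂) →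
      Φ (fun ω => X ω * Z ω) = Φ X * Φ Z) :
    a = 1 ∨ b = 1 ∨ c = 1 := by
  obtain ⟨X, Z, hX, hZ, hX01, hZ01, hXZ, hmapX, hmapZ⟩ :=
    hexist 0 1 0 1 le_rfl zero_le_one le_rfl zero_le_one
  have hΦ : ∀ W : Ω → ℝ, Measurable W → (∀ ω, W ω ∈ Icc 0 1) →
      Φ W = a * (∫ ω, W ω) + b * essInf W volume + c * essSup W volume :=
    fun W hW hW01 => hform W (bdd_of_mem_Icc hW01) hW fun ω => (hW01 ω).1
  have hΦ_unif : ∀ W : Ω → ℝ, Measurable W → (∀ ω, W ω ∈ Icc 0 1) →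
      volume.map W = unif 0 1 → Φ W = a / 2 + c := fun W hW hW01 hmap => by
    rw [hΦ W hW hW01, integral_eq_half_of_map_eq_unif_zero_one hW hmap,
      essInf_eq_zero_of_map_eq_unif_zero_one hW hmap hW01,
      essSup_eq_one_of_map_eq_unif_zero_one hW hmap hW01]
    ring
  have hXZ01 : ∀ ω, X ω * Z ω ∈ Icc 0 1 := fun ω =>
    ⟨mul_nonneg (hX01 ω).1 (hZ01 ω).1, mul_le_one₀ (hX01 ω).2 (hZ01 ω).1 (hZ01 ω).2⟩
  have hΦXZ : Φ (fun ω => X ω * Z ω) = a / 4 + c := by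
    rw [hΦ (fun ω => X ω * Z ω) (hX.mul hZ) hXZ01,
      integral_mul_eq_quarter_of_map_eq_unif_zero_one hXZ hX hZ hmapX hmapZ,
      essInf_mul_eq_zero_of_map_eq_unif_zero_one hX hmapX (fun ω => (hX01 ω).1) hZ01,
      essSup_mul_eq_one_of_map_eq_unif_zero_one hXZ hX hZ hmapX hmapZ fun ω => (hXZ01 ω).2]
    ring
  have hmul := hmult X Z hX hZ hXZ ⟨0, 1, le_rfl, zero_le_one, hmapX⟩
    ⟨0, 1, le_rfl, zero_le_one, hmapZ⟩
  rw [hΦXZ, hΦ_unif X hX hX01 hmapX, hΦ_unif Z hZ hZ01 hmapZ] at hmul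
  exact eq_one_or_eq_one_or_eq_one_of_mul_self_eq ha hb hc habc hmul

/-- A functional of the form
`Φ(X̃) = a E(X̃) + b ess inf(X̃) + c ess sup(X̃)` with `a, b, c ≥ 0`, `a+b+c = 1`,
that is multiplicative on independent uniform random variables, must be the
expectation (`a = 1`), the essential infimum (`b = 1`), or the essential
supremum (`c = 1`). -/
theorem stmt15 {Ω : Type*} [MeasureSpace Ω] [IsProbabilityMeasure (volume : Measure Ω)]
    (Φ : (Ω → ℝ) → ℝ) (a b c : ℝ)
    (ha : 0 ≤ a) (hb : 0 ≤ b) (hc : 0 ≤ c) (habc : a + b + c = 1)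
    (hform : ∀ X : Ω → ℝ, Bdd X → Measurable X → (∀ ω, 0 ≤ X ω) →
      Φ X = a * (∫ ω, X ω) + b * essInf X volume + c * essSup X volume)
    (hexist : ∀ x₁ x₂ z₁ z₂ : ℝ, 0 ≤ x₁ → x₁ ≤ x₂ → 0 ≤ z₁ → z₁ ≤ z₂ →
      ∃ X Z : Ω → ℝ, Measurable X ∧ Measurable Z ∧
        (∀ ω, X ω ∈ Set.Icc x₁ x₂) ∧ (∀ ω, Z ω ∈ Set.Icc z₁ z₂) ∧
        IndepFun X Z volume ∧
        Measure.map X volume = unif x₁ x₂ ∧ Measure.map Z volume = unif z₁ z₂)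
    (hmult : ∀ (X Z : Ω → ℝ), Measurable X → Measurable Z → IndepFun X Z volume →
      (∃ x₁ x₂ : ℝ, 0 ≤ x₁ ∧ x₁ ≤ x₂ ∧ Measure.map X volume = unif x₁ x₂) →
      (∃ z₁ z₂ : ℝ, 0 ≤ z₁ ∧ z₁ ≤ z₂ ∧ Measure.map Z volume = unif z₁ z₂) →
      Φ (fun ω => X ω * Z ω) = Φ X * Φ Z) :
    a = 1 ∨ b = 1 ∨ c = 1 :=
  stmt15_general Φ a b c ha hb hc habc hform hexist hmult
end

section
/- Let ρ be a monotone functional on bounded real random variables with convex support, and let ρ̊(X̃) = ρ(X̃′ + Ũ) − ρ(Ũ) be its noise extension to all bounded random variables (with X̃′ a copy of X̃ and Ũ a sufficiently large independent uniform noise). If X̃ ≥ Ỹ almost surely for bounded random variables X̃, Ỹ, then ρ̊(X̃) ≥ ρ̊(Ỹ). -/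
/-! Take a joint copy `(X', Y')` of `(X, Y)` and an independent noise `U` uniform on `[0, L]`,
with `L` at least the essential ranges `essSup - essInf` of `X` and `Y`. For bounded `X` the
essential infimum `a` and supremum `b` lie in its support, so the support of `X' + U` contains
`a + [0, L]` and `b + [0, L]`, whose union is `[a, b + L]` because `b - a ≤ L`: it is an interval.
As `Y' + U ≤ X' + U` a.s., monotonicity of `ρ` on variables with convex support gives the claim. -/

open MeasureTheory ProbabilityTheory

/-- The support of a real random variable: the smallest closed set of full
probability. -/
def suppRV {Ω : Type*} [MeasureSpace Ω] (X : Ω → ℝ) : Set ℝ :=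
  ⋂₀ {C : Set ℝ | IsClosed C ∧ volume (X ⁻¹' C) = 1}

open Set Filter

lemma Bdd.isBoundedUnder_le {α : Type*} {X : α → ℝ} (hX : Bdd X) (l : Filter α) :
    IsBoundedUnder (· ≤ ·) l X :=
  let ⟨M, hM⟩ := hX; isBoundedUnder_of ⟨M, fun ω => (abs_le.1 (hM ω)).2⟩

lemma Bdd.isBoundedUnder_ge {α : Type*} {X : α → ℝ} (hX : Bdd X) (l : Filter α) :
    IsBoundedUnder (· ≥ ·) l X :=
  let ⟨M, hM⟩ := hX; isBoundedUnder_of ⟨-M, fun ω => (abs_le.1 (hM ω)).1⟩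

lemma Bdd.add {α : Type*} {X Y : α → ℝ} (hX : Bdd X) (hY : Bdd Y) : Bdd (X + Y) :=
  let ⟨M, hM⟩ := hX; let ⟨N, hN⟩ := hY
  ⟨M + N, fun ω => (abs_add_le _ _).trans (add_le_add (hM ω) (hN ω))⟩

lemma bdd_of_forall_mem_Icc {α : Type*} {X : α → ℝ} {a b : ℝ}
    (h : ∀ ω, X ω ∈ Icc a b) : Bdd X :=
  ⟨max |a| |b|, fun ω => abs_le_max_abs_abs (h ω).1 (h ω).2⟩

lemma ae_unif_mem_Icc (a b : ℝ) : ∀ᵐ x ∂unif a b, x ∈ Icc a b := by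
  unfold unif
  split_ifs with hab
  · subst hab
    exact (ae_dirac_iff measurableSet_Icc).2 ⟨le_rfl, le_rfl⟩
  · exact ae_cond_mem measurableSet_Icc

section support

variable {Ω : Type*} [MeasureSpace Ω] [IsProbabilityMeasure (volume : Measure Ω)]
  {X U : Ω → ℝ}

lemma suppRV_subset_of_ae_mem (hXm : Measurable X) {C : Set ℝ} (hC : IsClosed C)
    (h : ∀ᵐ ω, X ω ∈ C) : suppRV X ⊆ C :=
  sInter_subset_of_mem ⟨hC, by
    rw [← measure_univ (μ := (volume : Measure Ω))]
    exact (ae_mem_iff_measure_eq (hXm hC.measurableSet).nullMeasurableSet).1 h⟩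

lemma measure_preimage_pos_of_mem_suppRV (hXm : Measurable X) {V : Set ℝ} (hV : IsOpen V)
    {x : ℝ} (hx : x ∈ suppRV X) (hxV : x ∈ V) : 0 < volume (X ⁻¹' V) := by
  refine pos_iff_ne_zero.2 fun h0 => ?_
  have : ∀ᵐ ω, X ω ∈ Vᶜ := measure_eq_zero_iff_ae_notMem.1 h0
  exact suppRV_subset_of_ae_mem hXm hV.isClosed_compl this hx hxV

lemma mem_suppRV_of_forall_ball (hXm : Measurable X) {x : ℝ}
    (h : ∀ ε > 0, 0 < volume (X ⁻¹' Metric.ball x ε)) : x ∈ suppRV X := by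
  rintro C ⟨hC, hfull⟩
  by_contra hxC
  obtain ⟨ε, hε, hball⟩ := Metric.isOpen_iff.1 hC.isOpen_compl x hxC
  have hnull : volume (X ⁻¹' Cᶜ) = 0 := by
    rw [preimage_compl]
    exact (prob_compl_eq_zero_iff (hXm hC.measurableSet)).2 hfull
  exact (h ε hε).ne' (measure_mono_null (preimage_mono hball) hnull)

lemma add_mem_suppRV_add (hXm : Measurable X) (hUm : Measurable U) (hind : IndepFun X U)
    {x u : ℝ} (hx : x ∈ suppRV X) (hu : u ∈ suppRV U) : x + u ∈ suppRV (X + U) := by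
  refine mem_suppRV_of_forall_ball (hXm.add hUm) fun ε hε => ?_
  have hsub : X ⁻¹' Metric.ball x (ε / 2) ∩ U ⁻¹' Metric.ball u (ε / 2)
      ⊆ (X + U) ⁻¹' Metric.ball (x + u) ε := fun ω ⟨h₁, h₂⟩ => by
    simp only [mem_preimage, Metric.mem_ball, Pi.add_apply] at h₁ h₂ ⊢
    calc dist (X ω + U ω) (x + u) ≤ dist (X ω) x + dist (U ω) u := dist_add_add_le _ _ _ _
      _ < ε / 2 + ε / 2 := add_lt_add h₁ h₂
      _ = ε := add_halves ε
  have hball {Z : Ω → ℝ} (hZm : Measurable Z) {z : ℝ} (hz : z ∈ suppRV Z) :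
      volume (Z ⁻¹' Metric.ball z (ε / 2)) ≠ 0 :=
    (measure_preimage_pos_of_mem_suppRV hZm Metric.isOpen_ball hz
      (Metric.mem_ball_self (half_pos hε))).ne'
  refine lt_of_lt_of_le ?_ (measure_mono hsub)
  rw [hind.measure_inter_preimage_eq_mul _ _ measurableSet_ball measurableSet_ball]
  exact ENNReal.mul_pos (hball hXm hx) (hball hUm hu)

lemma essSup_mem_suppRV (hXm : Measurable X) (hX : Bdd X) : essSup X volume ∈ suppRV X := by
  refine mem_suppRV_of_forall_ball hXm fun ε hε => pos_iff_ne_zero.2 fun h0 => ?_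
  have hle : ∀ᵐ ω, X ω ≤ essSup X volume - ε := by
    filter_upwards [ae_le_essSup (hX.isBoundedUnder_le _),
      measure_eq_zero_iff_ae_notMem.1 h0] with ω h₁ h₂
    by_contra! h
    exact h₂ (by rw [mem_preimage, Real.ball_eq_Ioo]; exact ⟨h, by linarith⟩)
  have := essSup_le_of_ae_le _ hle ((hX.isBoundedUnder_ge _).isCoboundedUnder_le)
  linarith

lemma essInf_mem_suppRV (hXm : Measurable X) (hX : Bdd X) : essInf X volume ∈ suppRV X := by
  refine mem_suppRV_of_forall_ball hXm fun ε hε => pos_iff_ne_zero.2 fun h0 => ?_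
  have hle : ∀ᵐ ω, essInf X volume + ε ≤ X ω := by
    filter_upwards [ae_essInf_le (hX.isBoundedUnder_ge _),
      measure_eq_zero_iff_ae_notMem.1 h0] with ω h₁ h₂
    by_contra! h
    exact h₂ (by rw [mem_preimage, Real.ball_eq_Ioo]; exact ⟨by linarith, h⟩)
  have := le_essInf_of_ae_le _ hle ((hX.isBoundedUnder_le _).isCoboundedUnder_ge)
  linarith

lemma Icc_subset_suppRV_of_map_eq_unif (hUm : Measurable U) {a b : ℝ}
    (hU : Measure.map U volume = unif a b) : Icc a b ⊆ suppRV U := by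
  intro u hu
  refine mem_suppRV_of_forall_ball hUm fun ε hε => ?_
  rw [← Measure.map_apply hUm measurableSet_ball, hU, unif]
  split_ifs with hab
  · obtain rfl : u = a := le_antisymm (hab ▸ hu.2) hu.1
    simp [Measure.dirac_apply' _ measurableSet_ball, hε]
  · obtain ⟨v, hv, huv⟩ := Metric.mem_closure_iff.1 ((closure_Ioo hab).symm ▸ hu) ε hε
    have hpos : 0 < volume (Ioo a b ∩ Metric.ball u ε) :=
      (isOpen_Ioo.inter Metric.isOpen_ball).measure_pos volume
        ⟨v, hv, Metric.mem_ball'.2 huv⟩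
    rw [cond_apply measurableSet_Icc]
    exact ENNReal.mul_pos (ENNReal.inv_ne_zero.2 measure_Icc_lt_top.ne)
      (hpos.trans_le (measure_mono (inter_subset_inter_left _ Ioo_subset_Icc_self))).ne'

lemma suppRV_add_eq_Icc (hXm : Measurable X) (hUm : Measurable U) (hind : IndepFun X U)
    {a b L : ℝ} (ha : a ∈ suppRV X) (hb : b ∈ suppRV X) (hX : ∀ᵐ ω, X ω ∈ Icc a b)
    (hU : ∀ᵐ ω, U ω ∈ Icc 0 L) (hUsupp : Icc 0 L ⊆ suppRV U) (hL : b - a ≤ L) :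
    suppRV (X + U) = Icc a (b + L) := by
  refine Subset.antisymm (suppRV_subset_of_ae_mem (hXm.add hUm) isClosed_Icc ?_) fun x hx => ?_
  · filter_upwards [hX, hU] with ω hXω hUω
    rw [Pi.add_apply]
    exact ⟨by linarith [hXω.1, hUω.1], by linarith [hXω.2, hUω.2]⟩
  rcases le_or_gt (x - a) L with h | h
  · simpa using add_mem_suppRV_add hXm hUm hind ha
      (hUsupp (show x - a ∈ Icc 0 L from ⟨by linarith [hx.1], h⟩))
  · simpa using add_mem_suppRV_add hXm hUm hind hb
      (hUsupp (show x - b ∈ Icc 0 L from ⟨by linarith, by linarith [hx.2]⟩))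

lemma convex_suppRV_add_of_map_eq_unif (hXm : Measurable X) (hUm : Measurable U) (hX : Bdd X)
    (hind : IndepFun X U) {L : ℝ} (hU : Measure.map U volume = unif 0 L)
    (hL : essSup X volume - essInf X volume ≤ L) : Convex ℝ (suppRV (X + U)) := by
  have hXIcc : ∀ᵐ ω, X ω ∈ Icc (essInf X volume) (essSup X volume) :=
    (ae_essInf_le (hX.isBoundedUnder_ge _)).and (ae_le_essSup (hX.isBoundedUnder_le _))
  have hUIcc : ∀ᵐ ω, U ω ∈ Icc 0 L :=
    (ae_map_iff hUm.aemeasurable measurableSet_Icc).1 (hU ▸ ae_unif_mem_Icc 0 L)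
  rw [suppRV_add_eq_Icc hXm hUm hind (essInf_mem_suppRV hXm hX) (essSup_mem_suppRV hXm hX) hXIcc
    hUIcc (Icc_subset_suppRV_of_map_eq_unif hUm hU) hL]
  exact convex_Icc _ _

end support

lemma ProbabilityTheory.IdentDistrib.essInf_eq {α β : Type*} [MeasurableSpace α]
    [MeasurableSpace β] {μ : Measure α} {ν : Measure β} {f : α → ℝ} {g : β → ℝ}
    (h : IdentDistrib f g μ ν) : essInf f μ = essInf g ν :=
  (h.comp (u := OrderDual.toDual) measurable_id).essSup_eq

lemma exists_measurable_forall_mem_Icc_ae_eq {α : Type*} [MeasurableSpace α]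
    {μ : Measure α} [NeZero μ] {X : α → ℝ} (hX : Measurable X) {a b : ℝ}
    (h : ∀ᵐ ω ∂μ, X ω ∈ Icc a b) :
    ∃ X' : α → ℝ, Measurable X' ∧ (∀ ω, X' ω ∈ Icc a b) ∧ X' =ᵐ[μ] X := by
  obtain ⟨ω₀, hω₀⟩ := h.exists
  have hab : a ≤ b := hω₀.1.trans hω₀.2
  refine ⟨fun ω => projIcc a b hab (X ω),
    (continuous_subtype_val.comp continuous_projIcc).measurable.comp hX,
    fun ω => (projIcc a b hab (X ω)).2, ?_⟩
  filter_upwards [h] with ω hω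
  rw [projIcc_of_mem _ hω]

lemma ProbabilityTheory.IdentDistrib.exists_bdd_ae_eq {α : Type*} [MeasurableSpace α]
    {μ : Measure α} [NeZero μ] {X X' : α → ℝ} (h : IdentDistrib X' X μ μ)
    (hX'm : Measurable X') (hX : Bdd X) :
    ∃ X'' : α → ℝ, Measurable X'' ∧ Bdd X'' ∧ IdentDistrib X'' X μ μ ∧ X'' =ᵐ[μ] X' := by
  obtain ⟨M, hM⟩ := hX
  obtain ⟨X'', hm, hmem, hae⟩ := exists_measurable_forall_mem_Icc_ae_eq hX'm
    (h.symm.ae_mem_snd measurableSet_Icc (Eventually.of_forall fun ω => abs_le.1 (hM ω)))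
  exact ⟨X'', hm, bdd_of_forall_mem_Icc hmem,
    (IdentDistrib.of_ae_eq hm.aemeasurable hae).trans h, hae⟩

/-- Monotonicity of the noise extension. If `ρ` is monotone on
bounded random variables with convex support and `ρ̊` is its noise extension
(`ρ̊(X̃) = ρ(X̃' + Ũ) − ρ(Ũ)` for any copy `X̃'` of `X̃` with a sufficiently large
independent uniform noise `Ũ`), and the space is rich enough to realize joint
copies with independent uniform noise, then `X̃ ≥ Ỹ` a.s. implies
`ρ̊(X̃) ≥ ρ̊(Ỹ)`. -/
theorem stmt18 {Ω : Type*} [MeasureSpace Ω] [IsProbabilityMeasure (volume : Measure Ω)]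
    (ρ ρo : (Ω → ℝ) → ℝ)
    (hmono : ∀ X Y : Ω → ℝ, Bdd X → Bdd Y → Measurable X → Measurable Y →
      Convex ℝ (suppRV X) → Convex ℝ (suppRV Y) → (∀ᵐ ω, Y ω ≤ X ω) → ρ Y ≤ ρ X)
    (hext : ∀ (X X' U : Ω → ℝ) (L : ℝ), Bdd X → Bdd X' →
      Measurable X → Measurable X' → Measurable U →
      Measure.map X' volume = Measure.map X volume →
      essSup X volume - essInf X volume ≤ L →
      Measure.map U volume = unif 0 L → IndepFun X' U volume →
      ρo X = ρ (fun ω => X' ω + U ω) - ρ U)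
    (hrich : ∀ (X Y : Ω → ℝ) (L : ℝ), Measurable X → Measurable Y → 0 ≤ L →
      ∃ X' Y' U : Ω → ℝ, Measurable X' ∧ Measurable Y' ∧ Measurable U ∧
        Measure.map (fun ω => (X' ω, Y' ω)) volume
          = Measure.map (fun ω => (X ω, Y ω)) volume ∧
        Measure.map U volume = unif 0 L ∧
        IndepFun (fun ω => (X' ω, Y' ω)) U volume)
    (X Y : Ω → ℝ) (hX : Bdd X) (hY : Bdd Y) (hXm : Measurable X) (hYm : Measurable Y)
    (hXY : ∀ᵐ ω, Y ω ≤ X ω) :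
    ρo Y ≤ ρo X := by
  set L := max (max (essSup X volume - essInf X volume) (essSup Y volume - essInf Y volume)) 0
  have hLX : essSup X volume - essInf X volume ≤ L := (le_max_left _ _).trans (le_max_left _ _)
  have hLY : essSup Y volume - essInf Y volume ≤ L := (le_max_right _ _).trans (le_max_left _ _)
  obtain ⟨X', Y', U, hX'm, hY'm, hUm, hlaw, hUlaw, hind⟩ :=
    hrich X Y L hXm hYm (le_max_right _ _)
  have hpair : IdentDistrib (fun ω => (X' ω, Y' ω)) (fun ω => (X ω, Y ω)) :=
    ⟨(hX'm.prodMk hY'm).aemeasurable, (hXm.prodMk hYm).aemeasurable, hlaw⟩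
  -- The copies are only a.s. bounded; modify them on a null set.
  obtain ⟨X'', hX''m, hX''b, hXlaw, hX''⟩ :=
    (hpair.comp measurable_fst).exists_bdd_ae_eq hX'm hX
  obtain ⟨Y'', hY''m, hY''b, hYlaw, hY''⟩ :=
    (hpair.comp measurable_snd).exists_bdd_ae_eq hY'm hY
  obtain ⟨U'', hU''m, hU''Icc, hU''⟩ := exists_measurable_forall_mem_Icc_ae_eq hUm
    ((ae_map_iff hUm.aemeasurable measurableSet_Icc).1 (hUlaw ▸ ae_unif_mem_Icc 0 L))
  have hU''law : Measure.map U'' volume = unif 0 L := (Measure.map_congr hU'').trans hUlaw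
  have hXind : IndepFun X'' U'' :=
    (hind.comp measurable_fst measurable_id).congr hX''.symm hU''.symm
  have hYind : IndepFun Y'' U'' :=
    (hind.comp measurable_snd measurable_id).congr hY''.symm hU''.symm
  rw [hext X X'' U'' L hX hX''b hXm hX''m hU''m hXlaw.map_eq hLX hU''law hXind,
    hext Y Y'' U'' L hY hY''b hYm hY''m hU''m hYlaw.map_eq hLY hU''law hYind]
  have hU''b : Bdd U'' := bdd_of_forall_mem_Icc hU''Icc
  refine sub_le_sub_right (hmono (X'' + U'') (Y'' + U'') (hX''b.add hU''b) (hY''b.add hU''b)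
    (hX''m.add hU''m) (hY''m.add hU''m) ?_ ?_ ?_) _
  · exact convex_suppRV_add_of_map_eq_unif hX''m hU''m hX''b hXind hU''law
      (by rwa [hXlaw.essSup_eq, hXlaw.essInf_eq])
  · exact convex_suppRV_add_of_map_eq_unif hY''m hU''m hY''b hYind hU''law
      (by rwa [hYlaw.essSup_eq, hYlaw.essInf_eq])
  · filter_upwards [hpair.symm.ae_mem_snd (measurableSet_le measurable_snd measurable_fst) hXY,
      hX'', hY''] with ω hω hXω hYω
    simpa [hXω, hYω] using hω
end

section
/- In the two-state MDP with states {Start, End}, a single action, reward 1 in Start and 0 in End, discount γ = 1/2, where from Start the system stays in Start with probability X̃ ~ Unif([0,1]) (sampled once, static) and moves to End with probability 1−X̃, the expected value function at Start is E(∑_{t≥0} (1/2)ᵗ X̃ᵗ) = E(1/(1−X̃/2)) = 2 log 2, whereas applying the expectation Bellman operator to this value function gives 1 + (1/2)·(1/2)·(2 log 2) = 1 + (log 2)/2 ≠ 2 log 2. Hence the expectation does not satisfy the Bellman fixed-point equation for static kernels. -/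
open Set
open scoped Interval

theorem integral_inv_one_sub_div {a b c : ℝ} (hc : c ≠ 0) (hcab : c ∉ [[a, b]]) :
    ∫ x in a..b, (1 - x / c)⁻¹ = c * Real.log ((c - a) / (c - b)) := by
  -- also at `x = c`, where both sides are the junk value `0`
  have hpoint : (fun x : ℝ => (1 - x / c)⁻¹) = fun x => c * (c - x)⁻¹ := by
    funext x
    rw [one_sub_div hc, inv_div, div_eq_mul_inv]
  have hzero : (0 : ℝ) ∉ [[c - b, c - a]] := by
    rw [mem_uIcc] at hcab ⊢
    contrapose! hcab
    rcases hcab with ⟨h₁, h₂⟩ | ⟨h₁, h₂⟩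
    · exact Or.inl ⟨by linarith, by linarith⟩
    · exact Or.inr ⟨by linarith, by linarith⟩
  rw [hpoint, intervalIntegral.integral_const_mul,
    intervalIntegral.integral_comp_sub_left (fun x => x⁻¹), integral_inv hzero]

/-- In the two-state example with discount `γ = 1/2` and
`X̃ ~ Unif([0,1])` static, the value at `Start` for a fixed realization `x` is
the geometric series `∑ (x/2)^t = 1/(1 - x/2)`, its expectation is
`∫₀¹ (1 - x/2)⁻¹ dx = 2 log 2`, the Bellman operator applied to this value gives
`1 + (1/2)·(1/2)·(2 log 2) = 1 + (log 2)/2`, and `2 log 2 ≠ 1 + (log 2)/2`: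
the expectation does not satisfy the Bellman fixed-point equation for static
kernels. -/
theorem stmt19 :
    (∀ x ∈ Set.Icc (0:ℝ) 1, ∑' t : ℕ, ((1/2) * x) ^ t = (1 - x / 2)⁻¹) ∧
    (∫ x in (0:ℝ)..1, (1 - x / 2)⁻¹) = 2 * Real.log 2 ∧
    1 + (1/2) * ((1/2) * (2 * Real.log 2)) = 1 + Real.log 2 / 2 ∧
    2 * Real.log 2 ≠ 1 + Real.log 2 / 2 := by
  refine ⟨fun x hx => ?_, ?_, by ring, ?_⟩
  · have hdiscount : |(1/2 : ℝ) * x| < 1 := by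
      rw [abs_lt]
      constructor <;> linarith [hx.1, hx.2]
    rw [tsum_geometric_of_abs_lt_one hdiscount]
    ring
  · rw [integral_inv_one_sub_div two_ne_zero (by norm_num [mem_uIcc])]
    norm_num
  · -- the equation would force `log 2 = 2 / 3`
    have := Real.log_two_gt_d9
    intro h
    linarith
end
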